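/- Let P ⊆ ℝ^n be a 0/1 polytope, let x^0 be a vertex of P, let c ∈ ℝ^n, and set v = 1 − 2x^0 (that is, v(i) = 1 if x^0(i) = 0 and v(i) = −1 if x^0(i) = 1). Then x^0 is the unique minimizer of ⟨v,·⟩ over P, and every Shadow-rule path on P with auxiliary vector v and objective c starting at x^0 has length at most n and contains a vertex maximizing ⟨c,·⟩ over P. -/

import Mathlib

open Finset

attribute [local instance] Classical.propDecidable

noncomputable section

/-- Standard dot product on `Fin n → ℝ`. -/
def dotR {n : ℕ} (c x : Fin n → ℝ) : ℝ := ∑ i, c i * x i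

/-- A polytope: the convex hull of a finite nonempty set of points. -/
def IsPolytope {n : ℕ} (P : Set (Fin n → ℝ)) : Prop :=
  ∃ V : Finset (Fin n → ℝ), V.Nonempty ∧ P = convexHull ℝ (V : Set (Fin n → ℝ))

/-- A 0/1 polytope: the convex hull of a finite nonempty subset of `{0,1}^n`. -/
def IsPolytope01 {n : ℕ} (P : Set (Fin n → ℝ)) : Prop :=
  ∃ V : Finset (Fin n → ℝ), V.Nonempty ∧ (∀ w ∈ V, ∀ i, w i = 0 ∨ w i = 1) ∧
    P = convexHull ℝ (V : Set (Fin n → ℝ))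

/-- A vertex of `P` is an extreme point of `P`. -/
def IsVertex {n : ℕ} (P : Set (Fin n → ℝ)) (x : Fin n → ℝ) : Prop :=
  x ∈ P.extremePoints ℝ

/-- Two distinct vertices are adjacent when the segment between them is a face. -/
def Adjacent {n : ℕ} (P : Set (Fin n → ℝ)) (x y : Fin n → ℝ) : Prop :=
  IsVertex P x ∧ IsVertex P y ∧ x ≠ y ∧ IsExtreme ℝ P (segment ℝ x y)

/-- `u` is a `w`-improving neighbor of `x`. -/
def ImpNbr {n : ℕ} (P : Set (Fin n → ℝ)) (w x u : Fin n → ℝ) : Prop :=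
  Adjacent P x u ∧ dotR w x < dotR w u

/-- A Shadow-rule path on `P` with auxiliary vector `v` and objective `c`:
vertices `x 0, …, x k`, each step a `v`-improving neighbor maximizing the slope
`⟨c, u − xᵢ⟩ / ⟨v, u − xᵢ⟩` over all `v`-improving neighbors, and the last vertex
has no `v`-improving neighbor. -/
def ShadowPath {n : ℕ} (P : Set (Fin n → ℝ)) (c v : Fin n → ℝ) (k : ℕ)
    (x : ℕ → Fin n → ℝ) : Prop :=
  (∀ i ≤ k, IsVertex P (x i)) ∧
  (∀ i < k, ImpNbr P v (x i) (x (i + 1)) ∧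
    ∀ u, ImpNbr P v (x i) u →
      dotR c (u - x i) / dotR v (u - x i)
        ≤ dotR c (x (i + 1) - x i) / dotR v (x (i + 1) - x i)) ∧
  (∀ u, ¬ ImpNbr P v (x k) u)

/-- `f(u)` relative to `x0`: the largest index (in `1, …, n` labelling) where `u`
differs from `x0`, and `0` if there is none. -/
def lastIdx {n : ℕ} (x0 u : Fin n → ℝ) : ℕ :=
  (Finset.univ.filter fun j : Fin n => u j ≠ x0 j).sup fun j => (j : ℕ) + 1

/-- `f(w)` for a 0/1 vector: the largest index (in `1, …, n` labelling) with
`w j = 1`, and `0` for the zero vector. -/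
def lastOne {n : ℕ} (w : Fin n → ℝ) : ℕ :=
  (Finset.univ.filter fun j : Fin n => w j = 1).sup fun j => (j : ℕ) + 1


/-! For `v = 𝟙 - 2x⁰`, the function `y ↦ ⟨v, y - x⁰⟩` is the `ℓ¹`-distance to `x⁰` on the unit
cube, and the Hamming distance on its vertices. So `x⁰` is the unique `v`-minimizer, and along a
path `⟨v, · - x⁰⟩` grows by a positive integer at every step, from `0` up to at most `n`.

Write `σᵢ` for the slope `⟨c, xᵢ₊₁ - xᵢ⟩ / ⟨v, xᵢ₊₁ - xᵢ⟩` of the `i`-th step. If a vertex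
maximizes `c - σ v` and `τ ≤ σ`, every neighbour improving `c - τ v` is `v`-improving; hence when
all `v`-improving neighbours have slope at most `τ`, the vertex maximizes `c - τ v` too. Since
`x⁰` maximizes `c - s v` for all large `s`, induction shows that `xᵢ` maximizes `c - σᵢ v`, the
slopes decrease, and `τ = 0` applies at the first vertex with nonpositive outgoing slope (or at
the last vertex).

The polytope fact behind this (a vertex which is not `w`-maximal has a `w`-improving edge) comes
from the vertex figure: project the polytope radially from `x` onto a hyperplane separating `x`
from the other vertices; the ray through an extreme point of the figure maximizing `w` meets the
polytope in an edge. -/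

open AffineMap

section LinearAlgebra

variable {E : Type*} [AddCommGroup E] [Module ℝ E]

lemma right_mem_extremePoints_segment (x y : E) : y ∈ (segment ℝ x y).extremePoints ℝ := by
  rcases eq_or_ne x y with rfl | hxy
  · simp [segment_same]
  rw [segment_eq_image_lineMap]
  refine ⟨⟨1, ⟨zero_le_one, le_rfl⟩, lineMap_apply_one _ _⟩, ?_⟩
  rintro _ ⟨α, hα, rfl⟩ _ ⟨β, hβ, rfl⟩ hy
  replace hy : lineMap x y (1 : ℝ) ∈ lineMap x y '' openSegment ℝ α β := by
    rwa [image_openSegment, lineMap_apply_one]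
  rw [(lineMap_injective ℝ hxy).mem_set_image] at hy
  have h1 : (1 : ℝ) ∈ (Set.Icc (0 : ℝ) 1).extremePoints ℝ := by simp
  rw [h1.2 hα hβ hy, lineMap_apply_one]

variable (g : E →ₗ[ℝ] ℝ)

def radialProj (w : E) : E := (g w)⁻¹ • w

lemma radialProj_smul {c : ℝ} (hc : c ≠ 0) (w : E) : radialProj g (c • w) = radialProj g w := by
  rw [radialProj, radialProj, map_smul, smul_eq_mul, smul_smul, mul_inv, mul_comm c⁻¹,
    mul_assoc, inv_mul_cancel₀ hc, mul_one]

lemma apply_radialProj {w : E} (hw : g w ≠ 0) : g (radialProj g w) = 1 := by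
  rw [radialProj, map_smul, smul_eq_mul, inv_mul_cancel₀ hw]

lemma smul_radialProj {w : E} (hw : g w ≠ 0) : g w • radialProj g w = w := by
  rw [radialProj, smul_smul, mul_inv_cancel₀ hw, one_smul]

lemma radialProj_mem_openSegment {a b : E} (ha : 0 < g a) (hb : 0 < g b) {s t : ℝ}
    (hs : 0 < s) (ht : 0 < t) :
    radialProj g (s • a + t • b) ∈ openSegment ℝ (radialProj g a) (radialProj g b) := by
  have hz : 0 < g (s • a + t • b) := by simp only [map_add, map_smul, smul_eq_mul]; positivity
  refine ⟨s * g a / g (s • a + t • b), t * g b / g (s • a + t • b), by positivity,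
    by positivity, ?_, ?_⟩
  · rw [← add_div, div_eq_one_iff_eq hz.ne']
    simp only [map_add, map_smul, smul_eq_mul]
  · simp only [radialProj, smul_smul, smul_add]
    congr 1 <;> congr 1 <;> field_simp

lemma radialProj_sum_mem_convexHull {ι : Type*} (s : Finset ι) {μ : ι → ℝ}
    (hμ : ∀ i ∈ s, 0 ≤ μ i) (hμs : 0 < ∑ i ∈ s, μ i) {p : ι → E}
    (hp : ∀ i ∈ s, g (p i) = 1) :
    radialProj g (∑ i ∈ s, μ i • p i) ∈ convexHull ℝ (p '' s) := by
  have hg : g (∑ i ∈ s, μ i • p i) = ∑ i ∈ s, μ i := by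
    simp only [map_sum, map_smul, smul_eq_mul]
    exact Finset.sum_congr rfl fun i hi => by rw [hp i hi, mul_one]
  rw [radialProj, hg]
  exact s.centerMass_mem_convexHull hμ hμs fun i hi => Set.mem_image_of_mem p hi

/-- The vertex figure of `convexHull ℝ V` at `x`, cut out by the hyperplane `{g = 1}` and
translated by `-x`. -/
def vertexFigure (V : Finset E) (x : E) : Set E :=
  convexHull ℝ ((fun p => radialProj g (p - x)) '' (V.erase x : Set E))

end LinearAlgebra

section Polytope

variable {E : Type*} [NormedAddCommGroup E] [NormedSpace ℝ E]

lemma exists_inter_ray_eq_segment {K : Set E} (hK : IsCompact K) (hKc : Convex ℝ K) {x u : E}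
    (hx : x ∈ K) (hu : u ∈ K) (hxu : x ≠ u) :
    ∃ t : ℝ, 1 ≤ t ∧ K ∩ lineMap x u '' Set.Ici (0 : ℝ) = segment ℝ x (lineMap x u t) := by
  set T : Set ℝ := Set.Ici 0 ∩ lineMap x u ⁻¹' K
  have hT : IsCompact T := by
    have : T = Set.Ici 0 ∩ (fun t : ℝ => t • (u - x)) ⁻¹' ((· + x) ⁻¹' K) := by
      ext t; simp [T, lineMap_apply_module']
    rw [this]
    exact ((isClosedEmbedding_smul_left (sub_ne_zero.2 hxu.symm)).isCompact_preimage
      ((Homeomorph.addRight x).isCompact_preimage.2 hK)).inter_left isClosed_Ici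
  have h0 : (0 : ℝ) ∈ T := ⟨Set.self_mem_Ici, by simpa using hx⟩
  have h1 : (1 : ℝ) ∈ T := ⟨Set.mem_Ici.2 zero_le_one, by simpa using hu⟩
  have hmax : sSup T ∈ T := hT.sSup_mem ⟨0, h0⟩
  have hTeq : T = Set.Icc 0 (sSup T) := by
    refine Set.Subset.antisymm (fun t ht => ⟨ht.1, le_csSup hT.bddAbove ht⟩) ?_
    exact ((convex_Ici 0).inter (hKc.affine_preimage (lineMap x u))).ordConnected.out h0 hmax
  refine ⟨sSup T, le_csSup hT.bddAbove h1, ?_⟩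
  rw [Set.inter_comm, ← Set.image_inter_preimage]
  change lineMap x u '' T = _
  conv_lhs => rw [hTeq, ← segment_eq_Icc hmax.1, image_segment, lineMap_apply_zero]

lemma exists_mem_extremePoints_isMaxOn_convexHull {S : Set E} (hS : S.Finite)
    (hne : S.Nonempty) (f : E →L[ℝ] ℝ) :
    ∃ q ∈ S, q ∈ (convexHull ℝ S).extremePoints ℝ ∧ IsMaxOn f (convexHull ℝ S) q := by
  have hQ := hS.isCompact_convexHull ℝ
  have hface := ContinuousLinearMap.toExposed.isExposed (l := f) (A := convexHull ℝ S)
  obtain ⟨z, hz, hzmax⟩ := hQ.exists_isMaxOn hne.convexHull f.continuous.continuousOn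
  obtain ⟨q, hq⟩ := (hface.isCompact hQ).extremePoints_nonempty
    ⟨z, show z ∈ f.toExposed _ from ⟨hz, fun y hy => hzmax hy⟩⟩
  have hqQ := hface.isExtreme.extremePoints_subset_extremePoints hq
  exact ⟨q, extremePoints_convexHull_subset hqQ, hqQ,
    fun y hy => (extremePoints_subset hq).2 y hy⟩

variable {V : Finset E} {x : E}

lemma exists_one_le_sub_of_mem_extremePoints
    (hx : x ∈ (convexHull ℝ (V : Set E)).extremePoints ℝ) :
    ∃ g : E →ₗ[ℝ] ℝ, ∀ p ∈ V, p ≠ x → 1 ≤ g (p - x) := by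
  have hsub : ((V.erase x : Finset E) : Set E) ⊆ convexHull ℝ (V : Set E) \ {x} := by
    intro p hp
    rw [Finset.coe_erase] at hp
    exact ⟨subset_convexHull ℝ _ hp.1, hp.2⟩
  have hsep : x ∉ convexHull ℝ ((V.erase x : Finset E) : Set E) := fun h =>
    ((convex_convexHull ℝ _).mem_extremePoints_iff_mem_sdiff_convexHull_sdiff.1 hx).2
      (convexHull_mono hsub h)
  obtain ⟨f, a, hfx, hf⟩ := geometric_hahn_banach_point_closed (convex_convexHull ℝ _)
    ((V.erase x).finite_toSet.isCompact_convexHull ℝ).isClosed hsep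
  refine ⟨(a - f x)⁻¹ • (f : E →ₗ[ℝ] ℝ), fun p hp hpx => ?_⟩
  have := hf p (subset_convexHull ℝ _ (Finset.mem_erase.2 ⟨hpx, hp⟩))
  simp only [LinearMap.smul_apply, map_sub, ContinuousLinearMap.coe_coe, smul_eq_mul]
  rw [← mul_sub, le_inv_mul_iff₀ (sub_pos.2 hfx)]
  linarith

variable {g : E →ₗ[ℝ] ℝ}

lemma pos_and_radialProj_mem_vertexFigure (hg : ∀ p ∈ V, p ≠ x → 1 ≤ g (p - x)) {z : E}
    (hz : z ∈ convexHull ℝ (V : Set E)) (hzx : z ≠ x) :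
    0 < g (z - x) ∧ radialProj g (z - x) ∈ vertexFigure g V x := by
  obtain ⟨w, hw0, hw1, rfl⟩ := Finset.mem_convexHull'.1 hz
  have hgpos : ∀ p ∈ V.erase x, 0 < g (p - x) := fun p hp =>
    zero_lt_one.trans_le (hg p (Finset.mem_of_mem_erase hp) (Finset.ne_of_mem_erase hp))
  have hdecomp : ∑ p ∈ V, w p • p - x =
      ∑ p ∈ V.erase x, (w p * g (p - x)) • radialProj g (p - x) := by
    calc ∑ p ∈ V, w p • p - x = ∑ p ∈ V, w p • (p - x) := by
          simp only [smul_sub, Finset.sum_sub_distrib, ← Finset.sum_smul, hw1, one_smul]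
      _ = ∑ p ∈ V.erase x, w p • (p - x) := (Finset.sum_erase V (by simp)).symm
      _ = _ := Finset.sum_congr rfl fun p hp => by
          rw [mul_smul, smul_radialProj g (hgpos p hp).ne']
  have hμ : ∀ p ∈ V.erase x, 0 ≤ w p * g (p - x) := fun p hp =>
    mul_nonneg (hw0 p (Finset.mem_of_mem_erase hp)) (hgpos p hp).le
  have hunit : ∀ p ∈ V.erase x, g (radialProj g (p - x)) = 1 := fun p hp =>
    apply_radialProj g (hgpos p hp).ne'
  have hpos : 0 < ∑ p ∈ V.erase x, w p * g (p - x) := by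
    refine (Finset.sum_nonneg hμ).lt_of_ne fun h => hzx (sub_eq_zero.1 ?_)
    rw [hdecomp]
    exact Finset.sum_eq_zero fun p hp => by
      rw [(Finset.sum_eq_zero_iff_of_nonneg hμ).1 h.symm p hp, zero_smul]
  refine ⟨?_, hdecomp ▸ radialProj_sum_mem_convexHull g _ hμ hpos hunit⟩
  rw [hdecomp, map_sum]
  refine hpos.trans_eq (Finset.sum_congr rfl fun p hp => ?_)
  rw [map_smul, hunit p hp, smul_eq_mul, mul_one]

lemma isExtreme_inter_ray (hx : x ∈ (convexHull ℝ (V : Set E)).extremePoints ℝ)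
    (hg : ∀ p ∈ V, p ≠ x → 1 ≤ g (p - x)) {u : E} (hu : u ∈ V) (hux : u ≠ x)
    (hq : radialProj g (u - x) ∈ (vertexFigure g V x).extremePoints ℝ) :
    IsExtreme ℝ (convexHull ℝ (V : Set E))
      (convexHull ℝ (V : Set E) ∩ lineMap x u '' Set.Ici (0 : ℝ)) := by
  set P := convexHull ℝ (V : Set E)
  set q := radialProj g (u - x)
  have hgu : 0 < g (u - x) := zero_lt_one.trans_le (hg u hu hux)
  have hray : ∀ a ∈ P, a ∈ lineMap x u '' Set.Ici (0 : ℝ) ↔ a = x ∨ radialProj g (a - x) = q := by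
    intro a ha
    constructor
    · rintro ⟨t, ht, rfl⟩
      rcases (Set.mem_Ici.1 ht).eq_or_lt with rfl | htpos
      · exact Or.inl (lineMap_apply_zero _ _)
      · right
        rw [lineMap_apply_module', add_sub_cancel_right, radialProj_smul g htpos.ne']
    · rintro (rfl | haq)
      · exact ⟨0, Set.self_mem_Ici, lineMap_apply_zero _ _⟩
      by_cases hax : a = x
      · exact ⟨0, Set.self_mem_Ici, hax ▸ lineMap_apply_zero _ _⟩
      have hga := (pos_and_radialProj_mem_vertexFigure hg ha hax).1
      refine ⟨g (a - x) * (g (u - x))⁻¹, Set.mem_Ici.2 (by positivity), ?_⟩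
      rw [lineMap_apply_module', mul_smul]
      change g (a - x) • q + x = a
      rw [← haq, smul_radialProj g hga.ne', sub_add_cancel]
  refine ⟨Set.inter_subset_left, ?_⟩
  rintro a ha b hb z ⟨hz, hzray⟩ hzab
  refine ⟨ha, (hray a ha).2 ?_⟩
  rcases (hray z hz).1 hzray with rfl | hzq
  · exact Or.inl (hx.2 ha hb hzab)
  by_cases hax : a = x
  · exact Or.inl hax
  right
  obtain ⟨s, t, hs, ht, hst, rfl⟩ := hzab
  rw [show s • a + t • b - x = s • (a - x) + t • (b - x) by
    rw [smul_sub, smul_sub, sub_add_sub_comm, ← add_smul, hst, one_smul]] at hzq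
  by_cases hbx : b = x
  · rwa [hbx, sub_self, smul_zero, add_zero, radialProj_smul g hs.ne'] at hzq
  have ha' := pos_and_radialProj_mem_vertexFigure hg ha hax
  have hb' := pos_and_radialProj_mem_vertexFigure hg hb hbx
  have hseg := radialProj_mem_openSegment g ha'.1 hb'.1 hs ht
  rw [hzq] at hseg
  exact hq.2 ha'.2 hb'.2 hseg

theorem exists_isExtreme_segment_of_lt (hx : x ∈ (convexHull ℝ (V : Set E)).extremePoints ℝ)
    (f : E →L[ℝ] ℝ) {y : E} (hy : y ∈ convexHull ℝ (V : Set E)) (hxy : f x < f y) :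
    ∃ m ∈ (convexHull ℝ (V : Set E)).extremePoints ℝ, m ≠ x ∧
      IsExtreme ℝ (convexHull ℝ (V : Set E)) (segment ℝ x m) ∧ f x < f m := by
  obtain ⟨g, hg⟩ := exists_one_le_sub_of_mem_extremePoints hx
  obtain ⟨hgy, hyQ⟩ := pos_and_radialProj_mem_vertexFigure hg hy (by rintro rfl; exact hxy.false)
  obtain ⟨_, ⟨u, hu, rfl⟩, hq, hqmax⟩ := exists_mem_extremePoints_isMaxOn_convexHull
    ((V.erase x).finite_toSet.image _) (convexHull_nonempty_iff.1 ⟨_, hyQ⟩) f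
  obtain ⟨hux, hu⟩ := Finset.mem_erase.1 hu
  have hfu : 0 < f (u - x) := by
    have hmax : f (radialProj g (y - x)) ≤ f (radialProj g (u - x)) := hqmax hyQ
    simp only [radialProj, map_smul, smul_eq_mul] at hmax
    refine pos_of_mul_pos_right ((mul_pos (inv_pos.2 hgy) ?_).trans_le hmax)
      (inv_nonneg.2 (zero_le_one.trans (hg u hu hux)))
    simpa [map_sub] using hxy
  obtain ⟨t, ht, hseg⟩ := exists_inter_ray_eq_segment (V.finite_toSet.isCompact_convexHull ℝ)
    (convex_convexHull ℝ _) hx.1 (subset_convexHull ℝ _ hu) (Ne.symm hux)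
  have hface := isExtreme_inter_ray hx hg hu hux hq
  rw [hseg] at hface
  refine ⟨lineMap x u t, hface.extremePoints_subset_extremePoints
    (right_mem_extremePoints_segment _ _), fun h => ?_, hface, ?_⟩
  · rw [lineMap_apply_module', add_eq_right, smul_eq_zero, sub_eq_zero] at h
    exact h.elim (fun h0 => by linarith) hux
  · rw [lineMap_apply_module', map_add, map_smul, smul_eq_mul]
    nlinarith

end Polytope

section Shadow

variable {n : ℕ}

lemma dotR_sub (w a b : Fin n → ℝ) : dotR w (a - b) = dotR w a - dotR w b :=
  dotProduct_sub w a b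

lemma dotR_sub_smul (c v y : Fin n → ℝ) (t : ℝ) :
    dotR (c - t • v) y = dotR c y - t * dotR v y := by
  change (c - t • v) ⬝ᵥ y = c ⬝ᵥ y - t * v ⬝ᵥ y
  rw [sub_dotProduct, smul_dotProduct, smul_eq_mul]

lemma dotR_sub_smul_le_iff {c v x y : Fin n → ℝ} {t : ℝ} :
    dotR (c - t • v) y ≤ dotR (c - t • v) x ↔ dotR c (y - x) ≤ t * dotR v (y - x) := by
  rw [dotR_sub_smul, dotR_sub_smul, dotR_sub, dotR_sub, mul_sub]
  constructor <;> intro h <;> linarith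

lemma isMaxOn_convexHull_of_forall_le {V : Set (Fin n → ℝ)} {w x : Fin n → ℝ}
    (h : ∀ p ∈ V, dotR w p ≤ dotR w x) : IsMaxOn (dotR w) (convexHull ℝ V) x :=
  fun _ hy => convexHull_min h (convex_halfSpace_le (dotProductBilin ℝ ℝ w).isLinear _) hy

variable {P : Set (Fin n → ℝ)}

lemma exists_impNbr (hP : IsPolytope P) {w x y : Fin n → ℝ} (hx : IsVertex P x) (hy : y ∈ P)
    (hxy : dotR w x < dotR w y) : ∃ u, ImpNbr P w x u := by
  obtain ⟨V, -, rfl⟩ := hP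
  obtain ⟨u, hu, hux, hseg, hwu⟩ := exists_isExtreme_segment_of_lt hx
    (LinearMap.toContinuousLinearMap (dotProductBilin ℝ ℝ w)) hy hxy
  exact ⟨u, ⟨hx, hu, hux.symm, hseg⟩, hwu⟩

/-- A neighbour improving `c - τ • v` is `v`-improving, since `x` is optimal for `c - σ • v`. -/
lemma IsMaxOn.dotR_sub_smul_of_forall_impNbr (hP : IsPolytope P) {c v x : Fin n → ℝ}
    {σ τ : ℝ} (hx : IsVertex P x) (hσ : IsMaxOn (dotR (c - σ • v)) P x) (hτσ : τ ≤ σ)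
    (hnbr : ∀ u, ImpNbr P v x u → dotR c (u - x) ≤ τ * dotR v (u - x)) :
    IsMaxOn (dotR (c - τ • v)) P x := by
  by_contra hτ
  obtain ⟨y, hy, hxy⟩ := by simpa [isMaxOn_iff] using hτ
  obtain ⟨u, hadj, hu⟩ := exists_impNbr hP hx hy hxy
  have hστ := dotR_sub_smul_le_iff.1 (hσ hadj.2.1.1)
  rw [← not_le, dotR_sub_smul_le_iff] at hu
  have hvu : dotR v x < dotR v u := by
    rw [← sub_pos, ← dotR_sub]
    nlinarith
  exact hu (hnbr u ⟨hadj, hvu⟩)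

lemma eventually_isMaxOn_dotR_sub_smul (hP : IsPolytope P) {c v x : Fin n → ℝ} (hx : x ∈ P)
    (hmin : ∀ y ∈ P, y ≠ x → dotR v x < dotR v y) :
    ∀ᶠ s : ℝ in Filter.atTop, IsMaxOn (dotR (c - s • v)) P x := by
  obtain ⟨V, -, rfl⟩ := hP
  have hV : ∀ᶠ s : ℝ in Filter.atTop, ∀ p ∈ V, dotR (c - s • v) p ≤ dotR (c - s • v) x := by
    refine (Filter.eventually_all_finset V).2 fun p hp => ?_
    rcases eq_or_ne p x with rfl | hpx
    · exact Filter.Eventually.of_forall fun _ => le_rfl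
    have hv : 0 < dotR v (p - x) := by
      rw [dotR_sub, sub_pos]; exact hmin p (subset_convexHull ℝ _ hp) hpx
    filter_upwards [Filter.eventually_ge_atTop (dotR c (p - x) / dotR v (p - x))] with s hs
    exact dotR_sub_smul_le_iff.2 ((div_le_iff₀ hv).1 hs)
  exact hV.mono fun s hs => isMaxOn_convexHull_of_forall_le hs

def edgeSlope (c v a b : Fin n → ℝ) : ℝ := dotR c (b - a) / dotR v (b - a)

variable {c v : Fin n → ℝ}

lemma IsMaxOn.edgeSlope_right {a b : Fin n → ℝ} (hab : dotR v (b - a) ≠ 0)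
    (ha : IsMaxOn (dotR (c - edgeSlope c v a b • v)) P a) :
    IsMaxOn (dotR (c - edgeSlope c v a b • v)) P b := by
  have hedge : dotR c (b - a) = edgeSlope c v a b * dotR v (b - a) :=
    (div_mul_cancel₀ _ hab).symm
  have hab : dotR (c - edgeSlope c v a b • v) b = dotR (c - edgeSlope c v a b • v) a := by
    rw [dotR_sub, dotR_sub] at hedge
    rw [dotR_sub_smul, dotR_sub_smul]
    linear_combination hedge
  exact fun y hy => (ha hy).trans hab.ge

namespace ShadowPath

variable {k : ℕ} {x : ℕ → Fin n → ℝ}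

lemma dotR_lt (h : ShadowPath P c v k x) {i : ℕ} (hi : i < k) :
    dotR v (x i) < dotR v (x (i + 1)) :=
  (h.2.1 i hi).1.2

lemma dotR_sub_ne_zero (h : ShadowPath P c v k x) {i : ℕ} (hi : i < k) :
    dotR v (x (i + 1) - x i) ≠ 0 := by
  rw [dotR_sub, sub_ne_zero]
  exact (h.dotR_lt hi).ne'

lemma le_edgeSlope_mul (h : ShadowPath P c v k x) {i : ℕ} (hi : i < k) {u : Fin n → ℝ}
    (hu : ImpNbr P v (x i) u) :
    dotR c (u - x i) ≤ edgeSlope c v (x i) (x (i + 1)) * dotR v (u - x i) := by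
  have hv : 0 < dotR v (u - x i) := by rw [dotR_sub, sub_pos]; exact hu.2
  exact (div_le_iff₀ hv).1 ((h.2.1 i hi).2 u hu)

lemma isMaxOn_edgeSlope (hP : IsPolytope P) (h : ShadowPath P c v k x)
    (hmin : ∀ y ∈ P, y ≠ x 0 → dotR v (x 0) < dotR v y) {i : ℕ} (hi : i < k) :
    IsMaxOn (dotR (c - edgeSlope c v (x i) (x (i + 1)) • v)) P (x i) := by
  induction i with
  | zero =>
    obtain ⟨s, hs, hσs⟩ := ((eventually_isMaxOn_dotR_sub_smul hP (h.1 0 hi.le).1 hmin).and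
      (Filter.eventually_ge_atTop (edgeSlope c v (x 0) (x 1)))).exists
    exact hs.dotR_sub_smul_of_forall_impNbr hP (h.1 0 hi.le) hσs fun u hu =>
      h.le_edgeSlope_mul hi hu
  | succ j ih =>
    have hj : j < k := by omega
    have hsucc := (ih hj).edgeSlope_right (h.dotR_sub_ne_zero hj)
    have hslope : edgeSlope c v (x (j + 1)) (x (j + 2)) ≤ edgeSlope c v (x j) (x (j + 1)) := by
      have hv : 0 < dotR v (x (j + 2) - x (j + 1)) := by
        rw [dotR_sub, sub_pos]; exact h.dotR_lt hi
      exact (div_le_iff₀ hv).2 (dotR_sub_smul_le_iff.1 (hsucc (h.1 (j + 2) hi).1))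
    exact hsucc.dotR_sub_smul_of_forall_impNbr hP (h.1 (j + 1) hi.le) hslope fun u hu =>
      h.le_edgeSlope_mul hi hu

theorem exists_isMaxOn (hP : IsPolytope P) (h : ShadowPath P c v k x)
    (hmin : ∀ y ∈ P, y ≠ x 0 → dotR v (x 0) < dotR v y) :
    ∃ i ≤ k, IsMaxOn (dotR c) P (x i) := by
  have hex : ∃ i, k ≤ i ∨ edgeSlope c v (x i) (x (i + 1)) ≤ 0 := ⟨k, Or.inl le_rfl⟩
  set i := Nat.find hex
  have hik : i ≤ k := Nat.find_min' hex (Or.inl le_rfl)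
  have hbefore : ∀ j < i, j < k ∧ 0 < edgeSlope c v (x j) (x (j + 1)) := fun j hj => by
    simpa using Nat.find_min hex hj
  -- `x i` is optimal for some `c - s • v` with `s ≥ 0`, and no `v`-improving neighbour of it
  -- increases `c`; so it is optimal for `c`.
  obtain ⟨s, hs, hs0⟩ : ∃ s : ℝ, IsMaxOn (dotR (c - s • v)) P (x i) ∧ 0 ≤ s := by
    rcases Nat.eq_zero_or_pos i with hi | hi
    · rw [hi]
      exact ((eventually_isMaxOn_dotR_sub_smul hP (h.1 0 (Nat.zero_le k)).1 hmin).and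
        (Filter.eventually_ge_atTop 0)).exists
    obtain ⟨j, hj⟩ := Nat.exists_eq_add_one_of_ne_zero hi.ne'
    obtain ⟨hjk, hpos⟩ := hbefore j (by omega)
    rw [hj]
    exact ⟨_, (h.isMaxOn_edgeSlope hP hmin hjk).edgeSlope_right (h.dotR_sub_ne_zero hjk),
      hpos.le⟩
  have hnbr : ∀ u, ImpNbr P v (x i) u → dotR c (u - x i) ≤ 0 * dotR v (u - x i) := by
    intro u hu
    rcases hik.lt_or_eq with hik | hik
    · have hσ := (Nat.find_spec hex).resolve_left (not_le.2 hik)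
      have hv : 0 < dotR v (u - x i) := by rw [dotR_sub, sub_pos]; exact hu.2
      nlinarith [h.le_edgeSlope_mul hik hu]
    · exact absurd hu (hik ▸ h.2.2 u)
  exact ⟨i, hik, by simpa using hs.dotR_sub_smul_of_forall_impNbr hP (h.1 i hik) hs0 hnbr⟩

end ShadowPath

end Shadow

section ZeroOne

lemma convexHull_subset_Icc {ι : Type*} {V : Set (ι → ℝ)}
    (hV : ∀ w ∈ V, ∀ i, w i = 0 ∨ w i = 1) : convexHull ℝ V ⊆ Set.Icc 0 1 :=
  convexHull_min (fun w hw => ⟨fun i => by rcases hV w hw i with h | h <;> simp [h],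
    fun i => by rcases hV w hw i with h | h <;> simp [h]⟩) (convex_Icc 0 1)

variable {n : ℕ} {x0 : Fin n → ℝ}

lemma dotR_sub_eq_sum_abs (hx0 : ∀ i, x0 i = 0 ∨ x0 i = 1) {y : Fin n → ℝ}
    (hy : y ∈ Set.Icc 0 1) : dotR (fun i => 1 - 2 * x0 i) (y - x0) = ∑ i, |y i - x0 i| := by
  refine Finset.sum_congr rfl fun i _ => ?_
  have h0 : 0 ≤ y i := hy.1 i
  have h1 : y i ≤ 1 := hy.2 i
  rcases hx0 i with h | h <;> simp only [h, Pi.sub_apply]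
  · rw [abs_of_nonneg (by linarith)]; ring
  · rw [abs_of_nonpos (by linarith)]; ring

lemma dotR_sub_eq_hammingDist (hx0 : ∀ i, x0 i = 0 ∨ x0 i = 1) {p : Fin n → ℝ}
    (hp : ∀ i, p i = 0 ∨ p i = 1) :
    dotR (fun i => 1 - 2 * x0 i) (p - x0) = hammingDist p x0 := by
  rw [dotR_sub_eq_sum_abs hx0 (convexHull_subset_Icc (V := {p}) (by simpa using hp)
    (subset_convexHull ℝ _ rfl)), hammingDist, Finset.natCast_card_filter]
  refine Finset.sum_congr rfl fun i _ => ?_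
  rcases hp i with h | h <;> rcases hx0 i with h' | h' <;> norm_num [h, h']

namespace IsPolytope01

variable {P : Set (Fin n → ℝ)}

lemma isPolytope (hP : IsPolytope01 P) : IsPolytope P :=
  let ⟨V, hne, _, hPV⟩ := hP
  ⟨V, hne, hPV⟩

lemma subset_Icc (hP : IsPolytope01 P) : P ⊆ Set.Icc 0 1 :=
  let ⟨_, _, hV, hPV⟩ := hP
  hPV ▸ convexHull_subset_Icc hV

lemma eq_zero_or_eq_one_of_isVertex (hP : IsPolytope01 P) {x : Fin n → ℝ} (hx : IsVertex P x)
    (i : Fin n) : x i = 0 ∨ x i = 1 := by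
  obtain ⟨V, -, hV, rfl⟩ := hP
  exact hV x (extremePoints_convexHull_subset hx) i

lemma dotR_lt_of_ne (hP : IsPolytope01 P) (hx0 : IsVertex P x0) {y : Fin n → ℝ} (hy : y ∈ P)
    (hne : y ≠ x0) :
    dotR (fun i => 1 - 2 * x0 i) x0 < dotR (fun i => 1 - 2 * x0 i) y := by
  rw [← sub_pos, ← dotR_sub,
    dotR_sub_eq_sum_abs (hP.eq_zero_or_eq_one_of_isVertex hx0) (hP.subset_Icc hy)]
  obtain ⟨i, hi⟩ := Function.ne_iff.1 hne
  exact Finset.sum_pos' (fun i _ => abs_nonneg _)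
    ⟨i, Finset.mem_univ _, abs_pos.2 (sub_ne_zero.2 hi)⟩

end IsPolytope01

theorem ShadowPath.length_le {P : Set (Fin n → ℝ)} (hP : IsPolytope01 P) {c : Fin n → ℝ}
    {k : ℕ} {x : ℕ → Fin n → ℝ} (h : ShadowPath P c (fun i => 1 - 2 * x 0 i) k x) : k ≤ n := by
  have h01 : ∀ i ≤ k, ∀ j, x i j = 0 ∨ x i j = 1 := fun i hi =>
    hP.eq_zero_or_eq_one_of_isVertex (h.1 i hi)
  have hdist : ∀ i ≤ k, i ≤ hammingDist (x i) (x 0) := by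
    intro i hi
    induction i with
    | zero => exact Nat.zero_le _
    | succ i ih =>
      have hlt := h.dotR_lt hi
      rw [← sub_lt_sub_iff_right (dotR (fun i => 1 - 2 * x 0 i) (x 0)), ← dotR_sub,
        ← dotR_sub, dotR_sub_eq_hammingDist (h01 0 (Nat.zero_le k)) (h01 i (by omega)),
        dotR_sub_eq_hammingDist (h01 0 (Nat.zero_le k)) (h01 (i + 1) hi), Nat.cast_lt] at hlt
      exact (ih (by omega)).trans_lt hlt
  simpa using (hdist k le_rfl).trans hammingDist_le_card_fintype

end ZeroOne

/-- Theorem 3.5 (Slim Shadow rule): for a 0/1 polytope and `v = 1 − 2x⁰`, the start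
`x⁰` is the unique `v`-minimizer, and any Shadow-rule path with auxiliary vector `v`
starting at `x⁰` has length at most `n` and contains a `c`-maximum of `P`. -/
theorem slim_shadow_bound {n : ℕ} (P : Set (Fin n → ℝ)) (hP : IsPolytope01 P)
    (c : Fin n → ℝ) (x0 : Fin n → ℝ) (hx0 : IsVertex P x0)
    (v : Fin n → ℝ) (hv : v = fun i => 1 - 2 * x0 i) :
    (∀ y ∈ P, y ≠ x0 → dotR v x0 < dotR v y) ∧
      ∀ (k : ℕ) (x : ℕ → Fin n → ℝ), ShadowPath P c v k x → x 0 = x0 →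
        k ≤ n ∧ ∃ i ≤ k, ∀ y ∈ P, dotR c y ≤ dotR c (x i) := by
  subst hv
  have hmin := fun y (hy : y ∈ P) => hP.dotR_lt_of_ne hx0 hy
  refine ⟨hmin, fun k x hx hx0' => ?_⟩
  subst hx0'
  obtain ⟨i, hi, hmax⟩ := hx.exists_isMaxOn hP.isPolytope hmin
  exact ⟨hx.length_le hP, i, hi, fun y hy => hmax hy⟩
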